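/- The centralizer of the pure cactus group PJ_3 in J_3 is the infinite cyclic subgroup generated by s_{1,2} s_{1,3}: an element g ∈ J_3 commutes with every element of PJ_3 if and only if g is an integer power of s_{1,2} s_{1,3}, and s_{1,2} s_{1,3} has infinite order. -/

import Mathlib

/-- The set of intervals `[p,q]`, `1 ≤ p < q ≤ n`, indexing the generators `s_{p,q}`
of the cactus group `J_n`. -/
def cactusSet (n : ℕ) : Set (ℕ × ℕ) := {pq | 1 ≤ pq.1 ∧ pq.1 < pq.2 ∧ pq.2 ≤ n}

/-- The defining relations (j1)-(j3) of the cactus group, restricted to a collection `C`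
of generating intervals: exactly those cactus relations involving only generators from `C`. -/
def cactusRels (C : Set (ℕ × ℕ)) : Set (FreeGroup C) :=
  {w | (∃ a : C, w = FreeGroup.of a * FreeGroup.of a) ∨
    (∃ a b : C, (a.1.2 < b.1.1 ∨ b.1.2 < a.1.1) ∧
      w = FreeGroup.of a * FreeGroup.of b * (FreeGroup.of a)⁻¹ * (FreeGroup.of b)⁻¹) ∨
    (∃ a b c : C, a.1.1 ≤ b.1.1 ∧ b.1.2 ≤ a.1.2 ∧
      c.1.1 = a.1.1 + a.1.2 - b.1.2 ∧ c.1.2 = a.1.1 + a.1.2 - b.1.1 ∧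
      w = FreeGroup.of a * FreeGroup.of b * (FreeGroup.of a)⁻¹ * (FreeGroup.of c)⁻¹)}

/-- The group presented by the generators `s_I`, `I ∈ C`, and those cactus relations
involving only these generators. -/
abbrev PartialCactusGroup (C : Set (ℕ × ℕ)) := PresentedGroup (cactusRels C)

/-- The cactus group `J_n`. -/
abbrev CactusGroup (n : ℕ) := PartialCactusGroup (cactusSet n)

/-- The involution of `{0,…,n-1}` underlying the permutation `w_{p,q}` (in `1`-based labelling:
the point `i` corresponds to the label `i+1 ∈ {1,…,n}`): it sends a label `i` with `p ≤ i ≤ q`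
to `p + q - i` and fixes all other labels. -/
def wFun (n p q : ℕ) (i : Fin n) : Fin n :=
  if h : 1 ≤ p ∧ p ≤ (i : ℕ) + 1 ∧ (i : ℕ) + 1 ≤ q ∧ q ≤ n then
    ⟨p + q - ((i : ℕ) + 1) - 1, by omega⟩
  else i

lemma wFun_involutive (n p q : ℕ) : Function.Involutive (wFun n p q) := by
  intro i
  unfold wFun
  by_cases h : 1 ≤ p ∧ p ≤ (i : ℕ) + 1 ∧ (i : ℕ) + 1 ≤ q ∧ q ≤ n
  · rw [dif_pos h, dif_pos (by simp only [Fin.val_mk]; omega)]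
    apply Fin.ext
    simp only [Fin.val_mk]
    omega
  · rw [dif_neg h, dif_neg h]

/-- The permutation `w_{p,q}` of `{1,…,n}` (coded on `Fin n` via `i ↦ i+1`), sending `i` to
`p+q-i` for `p ≤ i ≤ q` and fixing all other points. -/
def wPerm (n p q : ℕ) : Equiv.Perm (Fin n) :=
  Function.Involutive.toPerm (wFun n p q) (wFun_involutive n p q)

lemma wPerm_apply_val (n p q : ℕ) (i : Fin n) :
    ((wPerm n p q i : Fin n) : ℕ) =
      if 1 ≤ p ∧ p ≤ (i : ℕ) + 1 ∧ (i : ℕ) + 1 ≤ q ∧ q ≤ n then p + q - ((i : ℕ) + 1) - 1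
      else i := by
  rw [wPerm, Function.Involutive.coe_toPerm]
  unfold wFun
  split_ifs with h <;> rfl

lemma wPerm_inv (n p q : ℕ) : (wPerm n p q)⁻¹ = wPerm n p q := by
  simp [wPerm, Equiv.Perm.inv_def, Function.Involutive.toPerm_symm]

lemma wPerm_rels (n : ℕ) : ∀ r ∈ cactusRels (cactusSet n),
    FreeGroup.lift (fun a : cactusSet n => wPerm n a.1.1 a.1.2) r = 1 := by
  rintro r (⟨a, rfl⟩ | ⟨a, b, hab, rfl⟩ | ⟨a, b, c, h1, h2, h3, h4, rfl⟩) <;>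
    simp only [map_mul, map_inv, FreeGroup.lift_apply_of, wPerm_inv]
  · obtain ⟨ha1, ha2, ha3⟩ := a.2
    ext i
    simp only [Equiv.Perm.mul_apply, Equiv.Perm.one_apply, wPerm_apply_val]
    split_ifs <;> omega
  · obtain ⟨ha1, ha2, ha3⟩ := a.2
    obtain ⟨hb1, hb2, hb3⟩ := b.2
    ext i
    simp only [Equiv.Perm.mul_apply, Equiv.Perm.one_apply, wPerm_apply_val]
    split_ifs <;> omega
  · obtain ⟨ha1, ha2, ha3⟩ := a.2
    obtain ⟨hb1, hb2, hb3⟩ := b.2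
    obtain ⟨hc1, hc2, hc3⟩ := c.2
    ext i
    simp only [Equiv.Perm.mul_apply, Equiv.Perm.one_apply, wPerm_apply_val]
    split_ifs <;> omega

/-- The canonical projection `s : J_n → S_n`, sending `s_{p,q}` to `w_{p,q}`. -/
def sHom (n : ℕ) : CactusGroup n →* Equiv.Perm (Fin n) :=
  PresentedGroup.toGroup (f := fun a => wPerm n a.1.1 a.1.2) (wPerm_rels n)

/-- The pure cactus group `PJ_n`, i.e. the kernel of `s : J_n → S_n`. -/
abbrev PureCactusGroup (n : ℕ) : Subgroup (CactusGroup n) := (sHom n).ker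


/-- The generator `s_{1,2}` of `J_3`. -/
def s12 : CactusGroup 3 := PresentedGroup.of ⟨(1, 2), ⟨by omega, by omega, by omega⟩⟩

/-- The generator `s_{1,3}` of `J_3`. -/
def s13 : CactusGroup 3 := PresentedGroup.of ⟨(1, 3), ⟨by omega, by omega, by omega⟩⟩

/-! `J₃` is the infinite dihedral group. Since `s₁₂` inverts `t = s₁₂ s₁₃` by conjugation and
`s₂₃ = s₁₃ s₁₂ s₁₃`, every element of `J₃` is `tᵏ` or `s₁₂ tᵏ`; sending `s_{p,q}` to the reflection
`sr (p + q)` of `DihedralGroup 0` sends `t` to the rotation `r 1`, so `t` has infinite order.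
The sign of `s : J₃ → S₃` shows `PJ₃ ⊆ ⟨t⟩`, and `t³ ∈ PJ₃`. Hence powers of `t` centralize
`PJ₃`, while `s₁₂ tᵏ` inverts `t³ ≠ t⁻³` and so does not commute with it. -/

open DihedralGroup

section Dihedral

variable {G : Type*} [Group G] {s t : G}

theorem zpow_mul_eq_mul_zpow_neg (hs : s * s = 1) (hst : s * t * s = t⁻¹) (k : ℤ) :
    t ^ k * s = s * t ^ (-k) := by
  have hs' : s⁻¹ = s := inv_eq_of_mul_eq_one_right hs
  have hconj : s * t ^ k * s = t ^ (-k) := by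
    calc s * t ^ k * s = (s * t * s⁻¹) ^ k := by rw [conj_zpow, hs']
      _ = t ^ (-k) := by rw [hs', hst, inv_zpow, zpow_neg]
  calc t ^ k * s = s * (s * t ^ k * s) := by rw [← mul_assoc, ← mul_assoc, hs, one_mul]
    _ = s * t ^ (-k) := by rw [hconj]

theorem exists_eq_zpow_or_eq_mul_zpow_of_mem_closure (hs : s * s = 1)
    (hst : s * t * s = t⁻¹) {g : G} (hg : g ∈ Subgroup.closure {s, t}) :
    ∃ k : ℤ, g = t ^ k ∨ g = s * t ^ k := by
  induction hg using Subgroup.closure_induction with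
  | mem g hg =>
    rcases hg with rfl | rfl
    · exact ⟨0, .inr (by simp)⟩
    · exact ⟨1, .inl (by simp)⟩
  | one => exact ⟨0, .inl (by simp)⟩
  | mul g h _ _ ihg ihh =>
    obtain ⟨i, rfl | rfl⟩ := ihg <;> obtain ⟨j, rfl | rfl⟩ := ihh
    · exact ⟨i + j, .inl (zpow_add t i j).symm⟩
    · refine ⟨-i + j, .inr ?_⟩
      rw [← mul_assoc, zpow_mul_eq_mul_zpow_neg hs hst, mul_assoc, zpow_add]
    · exact ⟨i + j, .inr (by rw [mul_assoc, zpow_add])⟩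
    · refine ⟨-i + j, .inl ?_⟩
      rw [mul_assoc, ← mul_assoc (t ^ i), zpow_mul_eq_mul_zpow_neg hs hst, ← mul_assoc,
        ← mul_assoc, hs, one_mul, zpow_add]
  | inv g _ ih =>
    obtain ⟨k, rfl | rfl⟩ := ih
    · exact ⟨-k, .inl (zpow_neg t k).symm⟩
    · refine ⟨k, .inr ?_⟩
      rw [mul_inv_rev, inv_eq_of_mul_eq_one_right hs, ← zpow_neg,
        zpow_mul_eq_mul_zpow_neg hs hst, neg_neg]

end Dihedral

namespace PartialCactusGroup

variable {C : Set (ℕ × ℕ)}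

theorem of_mul_self (a : C) :
    (PresentedGroup.of a : PartialCactusGroup C) * PresentedGroup.of a = 1 :=
  PresentedGroup.one_of_mem (Or.inl ⟨a, rfl⟩)

theorem of_mul_of_mul_of {a b c : C} (hab₁ : a.1.1 ≤ b.1.1) (hab₂ : b.1.2 ≤ a.1.2)
    (hc₁ : c.1.1 = a.1.1 + a.1.2 - b.1.2) (hc₂ : c.1.2 = a.1.1 + a.1.2 - b.1.1) :
    (PresentedGroup.of a : PartialCactusGroup C) * PresentedGroup.of b * PresentedGroup.of a =
      PresentedGroup.of c := by
  have h : (PresentedGroup.of a : PartialCactusGroup C) * PresentedGroup.of b *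
      (PresentedGroup.of a)⁻¹ * (PresentedGroup.of c)⁻¹ = 1 :=
    PresentedGroup.one_of_mem (Or.inr (Or.inr ⟨a, b, c, hab₁, hab₂, hc₁, hc₂, rfl⟩))
  rwa [inv_eq_of_mul_eq_one_right (of_mul_self a), mul_inv_eq_one] at h

end PartialCactusGroup

theorem s12_mul_self : s12 * s12 = 1 := PartialCactusGroup.of_mul_self _

theorem s13_mul_self : s13 * s13 = 1 := PartialCactusGroup.of_mul_self _

theorem s12_mul_s12_mul_s13_mul_s12 : s12 * (s12 * s13) * s12 = (s12 * s13)⁻¹ := by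
  rw [← mul_assoc, s12_mul_self, one_mul, mul_inv_rev, inv_eq_of_mul_eq_one_right s12_mul_self,
    inv_eq_of_mul_eq_one_right s13_mul_self]

theorem of_mem_closure_s12_s12_mul_s13 (j : cactusSet 3) :
    PresentedGroup.of j ∈ Subgroup.closure {s12, s12 * s13} := by
  have h12 : s12 ∈ Subgroup.closure {s12, s12 * s13} := Subgroup.subset_closure (by simp)
  have h13 : s13 ∈ Subgroup.closure {s12, s12 * s13} := by
    have := Subgroup.mul_mem _ h12 (Subgroup.subset_closure (by simp) : s12 * s13 ∈ _)
    rwa [← mul_assoc, s12_mul_self, one_mul] at this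
  obtain ⟨⟨p, q⟩, hp, hpq, hq⟩ := j
  obtain ⟨rfl, rfl⟩ | ⟨rfl, rfl⟩ | ⟨rfl, rfl⟩ :
      (p = 1 ∧ q = 2) ∨ (p = 1 ∧ q = 3) ∨ (p = 2 ∧ q = 3) := by omega
  · exact h12
  · exact h13
  · rw [← PartialCactusGroup.of_mul_of_mul_of (a := ⟨(1, 3), by norm_num [cactusSet]⟩)
      (b := ⟨(1, 2), by norm_num [cactusSet]⟩) le_rfl (by decide) rfl rfl]
    exact Subgroup.mul_mem _ (Subgroup.mul_mem _ h13 h12) h13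

theorem exists_eq_zpow_or_eq_s12_mul_zpow (g : CactusGroup 3) :
    ∃ k : ℤ, g = (s12 * s13) ^ k ∨ g = s12 * (s12 * s13) ^ k :=
  exists_eq_zpow_or_eq_mul_zpow_of_mem_closure s12_mul_self s12_mul_s12_mul_s13_mul_s12
    (PresentedGroup.generated_by _ _ of_mem_closure_s12_s12_mul_s13 g)

def toInfDihedral : CactusGroup 3 →* DihedralGroup 0 :=
  PresentedGroup.toGroup (f := fun a => sr ((a.1.1 + a.1.2 : ℕ) : ZMod 0)) <| by
    rintro r (⟨a, rfl⟩ | ⟨a, b, hab, rfl⟩ | ⟨a, b, c, h₁, h₂, h₃, h₄, rfl⟩)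
    · simp
    -- (j2) is vacuous in `J₃`: no two of `[1,2]`, `[1,3]`, `[2,3]` are disjoint.
    · obtain ⟨ha₁, ha₂, ha₃⟩ := a.2
      obtain ⟨hb₁, hb₂, hb₃⟩ := b.2
      omega
    · obtain ⟨hb₁, hb₂, hb₃⟩ := b.2
      have h : ((c.1.1 + c.1.2 : ℕ) : ℤ) = 2 * (a.1.1 + a.1.2 : ℕ) - (b.1.1 + b.1.2 : ℕ) := by
        omega
      have h' := congrArg (Int.cast : ℤ → ZMod 0) h
      push_cast at h'
      simp only [map_mul, map_inv, FreeGroup.lift_apply_of, sr_mul_sr, r_mul_sr, inv_sr,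
        ← r_zero, r.injEq, Nat.cast_add]
      linear_combination h'

theorem toInfDihedral_s12 : toInfDihedral s12 = sr 3 := by
  rw [s12, toInfDihedral, PresentedGroup.toGroup.of]
  norm_num

theorem toInfDihedral_s13 : toInfDihedral s13 = sr 4 := by
  rw [s13, toInfDihedral, PresentedGroup.toGroup.of]
  norm_num

theorem toInfDihedral_s12_mul_s13 : toInfDihedral (s12 * s13) = r 1 := by
  rw [map_mul, toInfDihedral_s12, toInfDihedral_s13, sr_mul_sr]
  norm_num

theorem not_isOfFinOrder_s12_mul_s13 : ¬ IsOfFinOrder (s12 * s13) := fun h =>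
  orderOf_eq_zero_iff.mp orderOf_r_one (toInfDihedral_s12_mul_s13 ▸ toInfDihedral.isOfFinOrder h)

theorem not_commute_s12_mul_zpow (k : ℤ) :
    ¬ Commute (s12 * (s12 * s13) ^ k) ((s12 * s13) ^ 3) := by
  intro h
  have h' := congrArg toInfDihedral h.eq
  simp only [map_mul, map_pow, map_zpow, toInfDihedral_s12, toInfDihedral_s13, sr_mul_sr, r_pow,
    r_zpow, sr_mul_r, r_mul_sr, sr.injEq] at h'
  have h6 : (6 : ZMod 0) = 0 := by linear_combination h'
  norm_num at h6

theorem sign_sHom_s12 : Equiv.Perm.sign (sHom 3 s12) = -1 := by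
  rw [s12, sHom, PresentedGroup.toGroup.of]
  decide

theorem sign_sHom_s12_mul_s13 : Equiv.Perm.sign (sHom 3 (s12 * s13)) = 1 := by
  rw [map_mul, s12, s13, sHom, PresentedGroup.toGroup.of, PresentedGroup.toGroup.of]
  decide

theorem eq_zpow_of_mem_pureCactusGroup {x : CactusGroup 3} (hx : x ∈ PureCactusGroup 3) :
    ∃ k : ℤ, x = (s12 * s13) ^ k := by
  obtain ⟨k, hk | rfl⟩ := exists_eq_zpow_or_eq_s12_mul_zpow x
  · exact ⟨k, hk⟩
  · have h := congrArg Equiv.Perm.sign (MonoidHom.mem_ker.mp hx)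
    rw [map_mul, map_zpow, map_mul, map_zpow, sign_sHom_s12, sign_sHom_s12_mul_s13, one_zpow,
      mul_one, map_one] at h
    exact absurd h (by decide)

theorem s12_mul_s13_pow_three_mem : (s12 * s13) ^ 3 ∈ PureCactusGroup 3 := by
  rw [MonoidHom.mem_ker, map_pow, map_mul, s12, s13, sHom, PresentedGroup.toGroup.of,
    PresentedGroup.toGroup.of]
  decide

/-- The centralizer of `PJ_3` in `J_3` is the infinite cyclic subgroup
generated by `s_{1,2} s_{1,3}`. -/
theorem pj3_centralizer :
    (∀ g : CactusGroup 3,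
      (∀ x ∈ PureCactusGroup 3, g * x = x * g) ↔ g ∈ Subgroup.zpowers (s12 * s13)) ∧
    ¬ IsOfFinOrder (s12 * s13) := by
  refine ⟨fun g => ⟨fun hg => ?_, ?_⟩, not_isOfFinOrder_s12_mul_s13⟩
  · obtain ⟨k, rfl | rfl⟩ := exists_eq_zpow_or_eq_s12_mul_zpow g
    · exact ⟨k, rfl⟩
    · exact absurd (hg _ s12_mul_s13_pow_three_mem) (not_commute_s12_mul_zpow k)
  · rintro ⟨m, rfl⟩ x hx
    obtain ⟨k, rfl⟩ := eq_zpow_of_mem_pureCactusGroup hx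
    exact zpow_mul_comm _ m k
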